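/- For every integer n ≥ 1, if x and y are distinct strings in {a,b}^n and i (1 ≤ i ≤ n) is the 1-based index of the leftmost position where x and y differ, then exactly one of the strings x·b^{i-1}·a and y·b^{i-1}·a belongs to L_n. -/

import Mathlib

inductive Letter | a | b
deriving DecidableEq

instance : Fintype Letter := ⟨{Letter.a, Letter.b}, fun x => by cases x <;> simp⟩

/-- The language `L_n`: strings with two `a`'s at distance exactly `n`. -/
def L (n : ℕ) : Language Letter :=
  {w | ∃ i, i + n < w.length ∧ w[i]? = some Letter.a ∧ w[i + n]? = some Letter.a}

/-! The padding `b^j a` has length `j + 1` and its only `a` is its last letter, so a pair of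
`a`'s at distance `|x|` in `x b^j a` must end at that letter and hence start at `x[j]`. -/

lemma eq_of_getElem?_replicate_b_append_a_eq_a {i j : ℕ}
    (h : (List.replicate j Letter.b ++ [Letter.a])[i]? = some Letter.a) : i = j := by
  rcases lt_trichotomy i j with hij | rfl | hij
  · rw [List.getElem?_append_left (by simpa using hij), List.getElem?_replicate] at h
    simp [hij] at h
  · rfl
  · rw [List.getElem?_eq_none (by simp; omega)] at h
    cases h

lemma append_replicate_b_append_a_mem_L_iff (x : List Letter) {j : ℕ} (hj : j < x.length) :
    x ++ (List.replicate j Letter.b ++ [Letter.a]) ∈ L x.length ↔ x[j]? = some Letter.a := by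
  constructor
  · rintro ⟨i, -, hi, hin⟩
    rw [List.getElem?_append_right (by omega), Nat.add_sub_cancel] at hin
    obtain rfl := eq_of_getElem?_replicate_b_append_a_eq_a hin
    rwa [List.getElem?_append_left hj] at hi
  · intro hxj
    refine ⟨j, by simp; omega, ?_, ?_⟩
    · rwa [List.getElem?_append_left hj]
    · rw [List.getElem?_append_right (by omega)]
      simp

lemma Letter.xor_eq_a_of_ne {c d : Letter} (h : c ≠ d) : Xor (c = Letter.a) (d = Letter.a) := by
  cases c <;> cases d <;> simp_all [Xor]

/-- `j` is the 0-based position, i.e. the paper's `i - 1`. -/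
theorem stmt4_general (n : ℕ) (x y : List Letter)
    (hx : x.length = n) (hy : y.length = n)
    (j : ℕ) (hj : j < n) (hdiff : x[j]? ≠ y[j]?) :
    Xor' (x ++ (List.replicate j Letter.b ++ [Letter.a]) ∈ L n)
         (y ++ (List.replicate j Letter.b ++ [Letter.a]) ∈ L n) := by
  have hxj : j < x.length := hx ▸ hj
  have hyj : j < y.length := hy ▸ hj
  rw [← hx, append_replicate_b_append_a_mem_L_iff x hxj, hx, ← hy,
    append_replicate_b_append_a_mem_L_iff y hyj, List.getElem?_eq_getElem hxj,
    List.getElem?_eq_getElem hyj, Option.some.injEq, Option.some.injEq]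
  rw [List.getElem?_eq_getElem hxj, List.getElem?_eq_getElem hyj] at hdiff
  exact Letter.xor_eq_a_of_ne (fun h => hdiff (congrArg some h))

/-- If `j` is the (0-based) leftmost position where `x` and `y` differ
(so `i = j + 1` is the 1-based index), then exactly one of
`x·b^{i-1}·a` and `y·b^{i-1}·a` belongs to `L_n`. -/
theorem stmt4 (n : ℕ) (hn : 1 ≤ n) (x y : List Letter)
    (hx : x.length = n) (hy : y.length = n) (hxy : x ≠ y)
    (j : ℕ) (hj : j < n) (hdiff : x[j]? ≠ y[j]?)
    (hmin : ∀ l, l < j → x[l]? = y[l]?) :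
    Xor' (x ++ (List.replicate j Letter.b ++ [Letter.a]) ∈ L n)
         (y ++ (List.replicate j Letter.b ++ [Letter.a]) ∈ L n) :=
  stmt4_general n x y hx hy j hj hdiff
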